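/- For dimension d ≥ 3 the integral I(0) = (2π)^{−d} ∫_{[−π,π]^d} Φ(φ)^{−1} dφ is finite, while for d = 1 and d = 2 it is infinite. Equivalently, the function φ ↦ 1/Φ(φ) is integrable on [−π,π]^d if and only if d ≥ 3. -/

import Mathlib

open MeasureTheory Real Filter
open scoped ENNReal

noncomputable section

/-- The Fourier symbol `Φ(φ) = 2 ∑_j (1 - cos φ_j)` of the negative discrete Laplacian on `ℤ^d`. -/
def Phi (d : ℕ) (φ : Fin d → ℝ) : ℝ := 2 * ∑ j, (1 - Real.cos (φ j))

/-- The cube `[-π, π]^d`. -/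
def cube (d : ℕ) : Set (Fin d → ℝ) := Set.univ.pi fun _ => Set.Icc (-π) π

/-- `I(λ) = (2π)^{-d} ∫_{[-π,π]^d} (λ + Φ(φ))⁻¹ dφ` (Bochner integral, real-valued). -/
def Ir (d : ℕ) (lam : ℝ) : ℝ := ((2 * π) ^ d)⁻¹ * ∫ φ in cube d, (lam + Phi d φ)⁻¹

/-- `I(λ)` as an extended-nonnegative-real, `I(λ) = (2π)^{-d} ∫_{[-π,π]^d} (λ + Φ(φ))⁻¹ dφ`. -/
def IE (d : ℕ) (lam : ℝ) : ℝ≥0∞ :=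
  (∫⁻ φ in cube d, ENNReal.ofReal ((lam + Phi d φ)⁻¹)) / ENNReal.ofReal ((2 * π) ^ d)

/-!
On the cube `[-π, π]^d` the symbol is comparable to the square of the norm: the bounds
`(2/π²) t² ≤ 1 - cos t ≤ t² / 2` for `|t| ≤ π` give `(4/π²) ‖φ‖² ≤ Φ(φ) ≤ d ‖φ‖²`
(sup norm). So `1/Φ` is integrable on the cube exactly when `‖φ‖⁻²` is integrable near
the origin, which by polar coordinates means `∫₀ r^(d-1) r⁻² dr < ∞`, i.e. `d ≥ 3`.
-/

open Set Metric

section NormRpow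

variable {E : Type*} [NormedAddCommGroup E] [NormedSpace ℝ E] [FiniteDimensional ℝ E]
  [Nontrivial E] [MeasurableSpace E] [BorelSpace E] (μ : Measure E) [μ.IsAddHaarMeasure]

theorem integrableOn_ball_norm_rpow_iff {r s : ℝ} (hr : 0 < r) :
    IntegrableOn (fun x : E => ‖x‖ ^ s) (ball 0 r) μ ↔ -(Module.finrank ℝ E : ℝ) < s := by
  rw [integrableOn_fun_norm_addHaar μ (f := fun y => y ^ s)]
  have hpow : EqOn (fun y : ℝ => y ^ (Module.finrank ℝ E - 1) • y ^ s)
      (fun y => y ^ ((Module.finrank ℝ E : ℝ) - 1 + s)) (Ioo 0 r) := by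
    intro y hy
    have hdim : 1 ≤ Module.finrank ℝ E := Module.finrank_pos
    dsimp only
    rw [smul_eq_mul, ← Real.rpow_natCast, Real.rpow_add hy.1, Nat.cast_sub hdim, Nat.cast_one]
  rw [integrableOn_congr_fun hpow measurableSet_Ioo, intervalIntegral.integrableOn_Ioo_rpow_iff hr]
  constructor <;> intro h <;> linarith

theorem integrableOn_ball_inv_norm_sq_iff {r : ℝ} (hr : 0 < r) :
    IntegrableOn (fun x : E => (‖x‖ ^ 2)⁻¹) (ball 0 r) μ ↔ 2 < Module.finrank ℝ E := by
  have hpow : (fun x : E => (‖x‖ ^ 2)⁻¹) = fun x => ‖x‖ ^ (-2 : ℝ) := by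
    ext x
    rw [Real.rpow_neg (norm_nonneg x), Real.rpow_two]
  rw [hpow, integrableOn_ball_norm_rpow_iff μ hr, neg_lt_neg_iff]
  exact_mod_cast Iff.rfl

end NormRpow

theorem Phi_nonneg (d : ℕ) (φ : Fin d → ℝ) : 0 ≤ Phi d φ :=
  mul_nonneg zero_le_two (Finset.sum_nonneg fun j _ => sub_nonneg.2 (cos_le_one (φ j)))

theorem continuous_Phi (d : ℕ) : Continuous (Phi d) := by
  unfold Phi
  fun_prop

theorem cube_eq_closedBall (d : ℕ) : cube d = closedBall (0 : Fin d → ℝ) π := by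
  ext φ
  simp only [cube, Set.mem_pi, mem_univ, forall_const, mem_Icc, mem_closedBall_zero_iff,
    pi_norm_le_iff_of_nonneg pi_pos.le, Real.norm_eq_abs, abs_le]

theorem Phi_le_mul_norm_sq {d : ℕ} (φ : Fin d → ℝ) : Phi d φ ≤ d * ‖φ‖ ^ 2 := by
  unfold Phi
  rw [Finset.mul_sum]
  calc ∑ j, 2 * (1 - cos (φ j)) ≤ ∑ _j : Fin d, ‖φ‖ ^ 2 := by
        refine Finset.sum_le_sum fun j _ => ?_
        have hcoord : φ j ^ 2 ≤ ‖φ‖ ^ 2 := by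
          simpa [sq_abs] using pow_le_pow_left₀ (norm_nonneg _) (norm_le_pi_norm φ j) 2
        linarith [one_sub_sq_div_two_le_cos (x := φ j)]
    _ = d * ‖φ‖ ^ 2 := by simp

theorem norm_sq_le_mul_Phi {d : ℕ} {φ : Fin d → ℝ} (hφ : φ ∈ cube d) :
    ‖φ‖ ^ 2 ≤ π ^ 2 / 4 * Phi d φ := by
  have hcoord (j : Fin d) : φ j ^ 2 ≤ π ^ 2 / 4 * Phi d φ := by
    have hcos := cos_le_one_sub_mul_cos_sq (abs_le.2 (hφ j trivial))
    have hterm : 2 * (1 - cos (φ j)) ≤ Phi d φ := by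
      unfold Phi
      rw [Finset.mul_sum]
      exact Finset.single_le_sum (f := fun i => 2 * (1 - cos (φ i)))
        (fun i _ => by linarith [cos_le_one (φ i)]) (Finset.mem_univ j)
    have hπ : 0 < π ^ 2 := by positivity
    calc φ j ^ 2 = π ^ 2 / 4 * (4 / π ^ 2 * φ j ^ 2) := by field_simp
      _ ≤ π ^ 2 / 4 * Phi d φ := by
        gcongr
        linarith [show 4 / π ^ 2 * φ j ^ 2 = 2 * (2 / π ^ 2 * φ j ^ 2) by ring]
  have hnorm : ‖φ‖ ≤ √(π ^ 2 / 4 * Phi d φ) :=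
    (pi_norm_le_iff_of_nonneg (sqrt_nonneg _)).2 fun j => abs_le_sqrt (hcoord j)
  calc ‖φ‖ ^ 2 ≤ √(π ^ 2 / 4 * Phi d φ) ^ 2 := by gcongr
    _ = π ^ 2 / 4 * Phi d φ := sq_sqrt (by positivity [Phi_nonneg d φ])

theorem Phi_pos {d : ℕ} {φ : Fin d → ℝ} (hφ : φ ∈ cube d) (h0 : φ ≠ 0) : 0 < Phi d φ := by
  have hnorm : 0 < ‖φ‖ ^ 2 := by positivity
  have hΦ := norm_sq_le_mul_Phi hφ
  by_contra! hle
  nlinarith [pi_pos]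

theorem inv_Phi_le_mul_inv_norm_sq {d : ℕ} {φ : Fin d → ℝ} (hφ : φ ∈ cube d) :
    (Phi d φ)⁻¹ ≤ π ^ 2 / 4 * (‖φ‖ ^ 2)⁻¹ := by
  rcases eq_or_ne φ 0 with rfl | h0
  · simp [Phi]
  have hΦ := Phi_pos hφ h0
  calc (Phi d φ)⁻¹ = π ^ 2 / 4 * (π ^ 2 / 4 * Phi d φ)⁻¹ := by field_simp
    _ ≤ π ^ 2 / 4 * (‖φ‖ ^ 2)⁻¹ := by
      gcongr
      exact norm_sq_le_mul_Phi hφ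

theorem inv_norm_sq_le_mul_inv_Phi {d : ℕ} {φ : Fin d → ℝ} (hφ : φ ∈ cube d) :
    (‖φ‖ ^ 2)⁻¹ ≤ d * (Phi d φ)⁻¹ := by
  rcases eq_or_ne φ 0 with rfl | h0
  · simp [Phi]
  have hΦ := Phi_pos hφ h0
  rw [← div_eq_mul_inv, le_div_iff₀ hΦ]
  calc (‖φ‖ ^ 2)⁻¹ * Phi d φ ≤ (‖φ‖ ^ 2)⁻¹ * (d * ‖φ‖ ^ 2) := by
        gcongr
        exact Phi_le_mul_norm_sq φ
    _ = d := by field_simp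

theorem integrableOn_cube_inv_Phi_iff {d : ℕ} (hd : 1 ≤ d) :
    IntegrableOn (fun φ => (Phi d φ)⁻¹) (cube d) ↔ 3 ≤ d := by
  have : Nonempty (Fin d) := ⟨⟨0, hd⟩⟩
  have hdim : Module.finrank ℝ (Fin d → ℝ) = d := Module.finrank_fin_fun ℝ
  constructor
  · intro h
    have hball : ball 0 π ⊆ cube d := (cube_eq_closedBall d) ▸ ball_subset_closedBall
    have hint : IntegrableOn (fun φ : Fin d → ℝ => (‖φ‖ ^ 2)⁻¹) (ball 0 π) := by
      refine ((h.mono_set hball).const_mul d).mono' (by fun_prop) ?_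
      refine ae_restrict_of_forall_mem measurableSet_ball fun φ hφ => ?_
      rw [Real.norm_of_nonneg (by positivity)]
      exact inv_norm_sq_le_mul_inv_Phi (hball hφ)
    have := (integrableOn_ball_inv_norm_sq_iff volume pi_pos).1 hint
    omega
  · intro h
    have hint := (integrableOn_ball_inv_norm_sq_iff (volume : Measure (Fin d → ℝ))
      (r := 4) (by norm_num)).2 (by omega)
    have hsub : cube d ⊆ ball 0 4 :=
      (cube_eq_closedBall d) ▸ closedBall_subset_ball (by linarith [pi_lt_four])
    refine ((hint.mono_set hsub).const_mul (π ^ 2 / 4)).mono'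
      (continuous_Phi d).measurable.inv.aestronglyMeasurable ?_
    have hcube : MeasurableSet (cube d) := (cube_eq_closedBall d) ▸ measurableSet_closedBall
    refine ae_restrict_of_forall_mem hcube fun φ hφ => ?_
    rw [Real.norm_of_nonneg (inv_nonneg.2 (Phi_nonneg d φ))]
    exact inv_Phi_le_mul_inv_norm_sq hφ

theorem IE_zero_lt_top_iff (d : ℕ) :
    IE d 0 < ⊤ ↔ IntegrableOn (fun φ => (Phi d φ)⁻¹) (cube d) := by
  have hc : ENNReal.ofReal ((2 * π) ^ d) ≠ 0 := (ENNReal.ofReal_pos.2 (by positivity)).ne'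
  rw [IntegrableOn, ← lintegral_ofReal_ne_top_iff_integrable (f := fun φ => (Phi d φ)⁻¹)
    (continuous_Phi d).measurable.inv.aestronglyMeasurable
    (ae_of_all _ fun φ => inv_nonneg.2 (Phi_nonneg d φ))]
  simp only [IE, zero_add, lt_top_iff_ne_top, ne_eq, ENNReal.div_eq_top, hc, ENNReal.ofReal_ne_top]
  tauto

/-- for `d ≥ 3` the integral `I(0)` is finite, while for `d = 1, 2` it is
infinite; equivalently, `φ ↦ 1/Φ(φ)` is integrable on `[-π,π]^d` iff `d ≥ 3`. -/
theorem I_zero_finite_iff (d : ℕ) (hd : 1 ≤ d) :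
    (IE d 0 < ⊤ ↔ 3 ≤ d) ∧
      (IntegrableOn (fun φ => (Phi d φ)⁻¹) (cube d) ↔ 3 ≤ d) := by
  rw [IE_zero_lt_top_iff, and_self]
  exact integrableOn_cube_inv_Phi_iff hd
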